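/- Let λ be a singular cardinal and ⟨f_β : β < λ⁺⟩ a scale for λ on a product ∏_{j<cf(λ)} λ_j (modulo bounded sets). Define d : cf(λ) × λ⁺ → λ by d(η,β) := f_β(η). Then for every α ∈ G(f⃗) and every cofinal B ⊆ α, there exist η < cf(λ) and a cofinal B' ⊆ B on which β ↦ d(η,β) is injective. -/

import Mathlib

open Cardinal Set

noncomputable section

/-- The ordinal rank of an element of `o.ToType`. -/
def toOrd {o : Ordinal.{0}} (x : o.ToType) : Ordinal :=
  @Ordinal.typein o.ToType (· < ·) isWellOrder_lt x

lemma toOrd_lt_toOrd {o : Ordinal.{0}} {u v : o.ToType} : toOrd u < toOrd v ↔ u < v :=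
  @Ordinal.typein_lt_typein o.ToType (· < ·) isWellOrder_lt u v

lemma toOrd_le_toOrd {o : Ordinal.{0}} {u v : o.ToType} : toOrd u ≤ toOrd v ↔ u ≤ v := by
  rw [← not_lt, ← not_lt, toOrd_lt_toOrd]

lemma toOrd_lt_self {o : Ordinal.{0}} (u : o.ToType) : toOrd u < o := by
  have h := @Ordinal.typein_lt_type o.ToType (· < ·) isWellOrder_lt u
  rwa [Ordinal.type_toType] at h

lemma exists_toOrd_eq {o ξ : Ordinal.{0}} (h : ξ < o) : ∃ u : o.ToType, toOrd u = ξ :=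
  @Ordinal.typein_surj o.ToType (· < ·) isWellOrder_lt ξ (by rwa [Ordinal.type_toType])

/-- Let `λ` be a singular cardinal and `⟨f_β | β < λ⁺⟩` a scale for `λ` on a product
`∏_{j<cf(λ)} λ_j` modulo bounded sets.  Define `d(η,β) := f_β(η)`.  Then for every
`α ∈ G(f⃗)` and every cofinal `B ⊆ α`, there are `η < cf(λ)` and a cofinal `B' ⊆ B` on
which `β ↦ d(η,β)` is injective. -/
theorem scale_injective_on_good_points (lam : Cardinal)
    (hlam : ℵ₀ ≤ lam) (hsing : lam.ord.cof < lam)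
    (l : lam.ord.cof.ord.ToType → Cardinal)
    (hlreg : ∀ j, (l j).IsRegular) (hllt : ∀ j, l j < lam)
    (hlmono : StrictMono l) (hlcof : ∀ μ : Cardinal, μ < lam → ∃ j, μ ≤ l j)
    (f : (Order.succ lam).ord.ToType → lam.ord.cof.ord.ToType → Ordinal)
    (hfprod : ∀ β j, f β j < (l j).ord)
    (hfinc : ∀ β γ, β < γ → ∃ i, ∀ j, i ≤ j → f β j < f γ j)
    (hfcof : ∀ g : lam.ord.cof.ord.ToType → Ordinal, (∀ j, g j < (l j).ord) →
      ∃ β, ∃ i, ∀ j, i ≤ j → g j ≤ f β j) :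
    ∀ α : (Order.succ lam).ord.ToType,
      (toOrd α).cof ≠ lam.ord.cof →
      (∃ A : Set (Order.succ lam).ord.ToType, (∀ a ∈ A, a < α) ∧
        (∀ x, x < α → ∃ a ∈ A, x ≤ a) ∧
        ∃ i, ∀ γ ∈ A, ∀ δ ∈ A, γ < δ → ∀ j, i ≤ j → f γ j < f δ j) →
      ∀ B : Set (Order.succ lam).ord.ToType, (∀ b ∈ B, b < α) →
        (∀ x, x < α → ∃ b ∈ B, x ≤ b) →
        ∃ η, ∃ B' ⊆ B, (∀ x, x < α → ∃ b ∈ B', x ≤ b) ∧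
          Set.InjOn (fun β => f β η) B' := by
  intro α hcof hG B hBlt hBcof
  obtain ⟨A, hAlt, hAcof, i, hAi⟩ := hG
  have hκlim : Order.IsSuccLimit lam.ord := Cardinal.isSuccLimit_ord hlam
  have hκ0 : ℵ₀ ≤ lam.ord.cof := Ordinal.aleph0_le_cof.2 hκlim
  have hκreg : (lam.ord.cof).IsRegular := Cardinal.isRegular_cof hκlim
  have hIne : Nonempty (lam.ord.cof.ord.ToType) := by
    refine Ordinal.nonempty_toType_iff.2 ?_
    simp only [ne_eq, Cardinal.ord_eq_zero]
    exact (aleph0_pos.trans_le hκ0).ne'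
  by_cases hne : ∃ x : (Order.succ lam).ord.ToType, x < α
  swap
  · push_neg at hne
    exact ⟨hIne.some, ∅, Set.empty_subset _,
      fun x hx => absurd hx (hne x).not_gt, Set.injOn_empty _⟩
  by_cases hlim : ∀ x : (Order.succ lam).ord.ToType, x < α → ∃ y, x < y ∧ y < α
  swap
  · push_neg at hlim
    obtain ⟨m, hmα, hmax⟩ := hlim
    obtain ⟨b0, hb0B, hmb0⟩ := hBcof m hmα
    refine ⟨hIne.some, {b0}, Set.singleton_subset_iff.2 hb0B, ?_, ?_⟩
    · intro x hx
      refine ⟨b0, Set.mem_singleton _, ?_⟩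
      have hxm : x ≤ m := by
        by_contra hc
        exact absurd hx (hmax x (not_le.1 hc)).not_gt
      exact hxm.trans hmb0
    · intro u hu v hv _
      rw [Set.mem_singleton_iff] at hu hv
      rw [hu, hv]
  -- main case: `α` is a limit point
  have hβlim : Order.IsSuccLimit (toOrd α) := by
    rw [Ordinal.isSuccLimit_iff]
    constructor
    · obtain ⟨x, hx⟩ := hne
      have h1 := toOrd_lt_toOrd.2 hx
      intro h0
      rw [h0] at h1
      exact absurd h1 zero_le.not_gt
    · refine Order.isSuccPrelimit_of_succ_lt fun ξ hξ => ?_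
      obtain ⟨x, rfl⟩ := exists_toOrd_eq (hξ.trans (toOrd_lt_self α))
      obtain ⟨y, hxy, hyα⟩ := hlim x (toOrd_lt_toOrd.1 hξ)
      exact lt_of_le_of_lt (Order.succ_le_of_lt (toOrd_lt_toOrd.2 hxy))
        (toOrd_lt_toOrd.2 hyα)
  have hc0 : ℵ₀ ≤ (toOrd α).cof := Ordinal.aleph0_le_cof.2 hβlim
  have hcreg : ((toOrd α).cof).IsRegular := Cardinal.isRegular_cof hβlim
  -- a cofinal family below `α` indexed by `(toOrd α).cof.ord.ToType`
  have hfam_ex : ∃ h : (toOrd α).cof.ord.ToType → (Order.succ lam).ord.ToType,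
      (∀ τ, h τ < α) ∧ ∀ x, x < α → ∃ τ, x ≤ h τ := by
    obtain ⟨S, hSu, hScard⟩ :=
      Order.exists_cof_eq (toOrd α).ToType
    rw [← Ordinal.cof_type, Ordinal.type_toType] at hScard
    have hmk : #((toOrd α).cof.ord.ToType) = #S := by
      rw [Cardinal.mk_toType, Cardinal.card_ord, hScard]
    obtain ⟨eqv⟩ := Cardinal.eq.1 hmk
    choose h hh using fun τ : (toOrd α).cof.ord.ToType =>
      exists_toOrd_eq ((toOrd_lt_self ((eqv τ : S) : (toOrd α).ToType)).trans
        (toOrd_lt_self α))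
    refine ⟨h, fun τ => ?_, fun x hx => ?_⟩
    · refine toOrd_lt_toOrd.1 ?_
      rw [hh τ]
      exact toOrd_lt_self _
    · obtain ⟨s', hs'⟩ := exists_toOrd_eq (o := toOrd α) (toOrd_lt_toOrd.2 hx)
      obtain ⟨s, hsS, hss'⟩ := hSu s'
      refine ⟨eqv.symm ⟨s, hsS⟩, ?_⟩
      refine toOrd_le_toOrd.1 ?_
      rw [hh, Equiv.apply_symm_apply, ← hs']
      exact toOrd_le_toOrd.2 hss'
  obtain ⟨hfam, hfamlt, hfamcof⟩ := hfam_ex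
  -- interleaving triples
  have key : ∀ x : (Order.succ lam).ord.ToType, x < α →
      ∃ (a b a' : (Order.succ lam).ord.ToType) (e : lam.ord.cof.ord.ToType),
        a ∈ A ∧ b ∈ B ∧ a' ∈ A ∧ x ≤ a ∧ a ≤ b ∧ b ≤ a' ∧ i ≤ e ∧
        ∀ j, e ≤ j → f a j ≤ f b j ∧ f b j ≤ f a' j := by
    intro x hx
    obtain ⟨a, haA, hxa⟩ := hAcof x hx
    obtain ⟨b, hbB, hab⟩ := hBcof a (hAlt a haA)
    obtain ⟨a', ha'A, hba'⟩ := hAcof b (hBlt b hbB)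
    have h1 : ∃ e1, ∀ j, e1 ≤ j → f a j ≤ f b j := by
      rcases eq_or_lt_of_le hab with h | h
      · exact ⟨hIne.some, fun j _ => by rw [h]⟩
      · obtain ⟨e1, he1⟩ := hfinc a b h
        exact ⟨e1, fun j hj => (he1 j hj).le⟩
    have h2 : ∃ e2, ∀ j, e2 ≤ j → f b j ≤ f a' j := by
      rcases eq_or_lt_of_le hba' with h | h
      · exact ⟨hIne.some, fun j _ => by rw [h]⟩
      · obtain ⟨e2, he2⟩ := hfinc b a' h
        exact ⟨e2, fun j hj => (he2 j hj).le⟩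
    obtain ⟨e1, he1⟩ := h1
    obtain ⟨e2, he2⟩ := h2
    refine ⟨a, b, a', max i (max e1 e2), haA, hbB, ha'A, hxa, hab, hba',
      le_max_left _ _, fun j hj => ⟨?_, ?_⟩⟩
    · exact he1 j (((le_max_left e1 e2).trans (le_max_right i _)).trans hj)
    · exact he2 j (((le_max_right e1 e2).trans (le_max_right i _)).trans hj)
  choose av bv a'v ev ha hb ha' hxa hab hba' hie he using key
  -- recursion producing an interleaved chain
  have exStep : ∀ (σ : (toOrd α).cof.ord.ToType)
      (prev : ∀ τ, τ < σ → {x : (Order.succ lam).ord.ToType // x < α}),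
      ∃ x, x < α ∧
        (∀ τ (hτ : τ < σ), toOrd (a'v (prev τ hτ).1 (prev τ hτ).2) < toOrd x) ∧
        ∀ τ, τ ≤ σ → toOrd (hfam τ) < toOrd x := by
    intro σ prev
    have hsucclt : ∀ y : (Order.succ lam).ord.ToType, y < α → toOrd y + 1 < toOrd α := by
      intro y hy
      rw [Ordinal.add_one_eq_succ]
      exact hβlim.succ_lt (toOrd_lt_toOrd.2 hy)
    have hcard2 : #(↑(Set.Iic σ)) < (toOrd α).cof := by
      have h1 : #(↑(Set.Iic σ)) ≤ #(↑(Set.Iio σ)) + 1 := by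
        rw [← Set.Iio_insert]
        exact Cardinal.mk_insert_le
      exact h1.trans_lt (Cardinal.add_lt_of_lt hc0 (Cardinal.mk_Iio_ord_toType σ)
        (Cardinal.one_lt_aleph0.trans_le hc0))
    have hcard1 : #(↑(Set.Iio σ)) < (toOrd α).cof := Cardinal.mk_Iio_ord_toType σ
    have hsup1 : iSup (fun τ : ↑(Set.Iio σ) =>
        toOrd (a'v (prev τ.1 τ.2).1 (prev τ.1 τ.2).2) + 1) < toOrd α :=
      Ordinal.iSup_lt_ord hcard1 (fun τ => hsucclt _ (hAlt _ (ha' _ _)))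
    have hsup2 : iSup (fun τ : ↑(Set.Iic σ) => toOrd (hfam τ.1) + 1) < toOrd α :=
      Ordinal.iSup_lt_ord hcard2 (fun τ => hsucclt _ (hfamlt _))
    obtain ⟨x, hx⟩ := exists_toOrd_eq ((max_lt hsup1 hsup2).trans (toOrd_lt_self α))
    refine ⟨x, toOrd_lt_toOrd.1 (by rw [hx]; exact max_lt hsup1 hsup2), ?_, ?_⟩
    · intro τ hτ
      have h2 : toOrd (a'v (prev τ hτ).1 (prev τ hτ).2) + 1 ≤ toOrd x := by
        rw [hx]
        exact le_trans (Ordinal.le_iSup _ (⟨τ, hτ⟩ : ↑(Set.Iio σ))) (le_max_left _ _)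
      rw [Ordinal.add_one_eq_succ, Order.succ_le_iff] at h2
      exact h2
    · intro τ hτ
      have h2 : toOrd (hfam τ) + 1 ≤ toOrd x := by
        rw [hx]
        exact le_trans (Ordinal.le_iSup _ (⟨τ, hτ⟩ : ↑(Set.Iic σ))) (le_max_right _ _)
      rw [Ordinal.add_one_eq_succ, Order.succ_le_iff] at h2
      exact h2
  choose step hstep using exStep
  obtain ⟨X, hX1, hX2⟩ :
      ∃ X : (toOrd α).cof.ord.ToType → {x : (Order.succ lam).ord.ToType // x < α},
        (∀ σ τ, τ < σ → toOrd (a'v (X τ).1 (X τ).2) < toOrd (X σ).1) ∧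
        (∀ σ τ, τ ≤ σ → toOrd (hfam τ) < toOrd (X σ).1) := by
    refine ⟨WellFoundedLT.fix (motive := fun _ => {x : (Order.succ lam).ord.ToType // x < α})
      (fun σ prev => ⟨step σ prev, (hstep σ prev).1⟩), ?_, ?_⟩
    · intro σ τ hτ
      conv_rhs => rw [WellFoundedLT.fix_eq]
      exact (hstep σ _).2.1 τ hτ
    · intro σ τ hτ
      conv_rhs => rw [WellFoundedLT.fix_eq]
      exact (hstep σ _).2.2 τ hτ
  -- choose the index `η` and an unbounded set of stages
  have hSη : ∃ (η : lam.ord.cof.ord.ToType) (S : Set ((toOrd α).cof.ord.ToType)),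
      (∀ σ, ∃ τ ∈ S, σ ≤ τ) ∧ ∀ τ ∈ S, ev (X τ).1 (X τ).2 ≤ η := by
    rcases hcof.lt_or_gt with hlt | hlt
    · -- cf(α) < cf(λ): bound all indices
      have hcard : #((toOrd α).cof.ord.ToType) < lam.ord.cof.ord.cof := by
        rw [Cardinal.mk_toType, Cardinal.card_ord, hκreg.cof_eq]
        exact hlt
      have hsup : iSup (fun σ => toOrd (ev (X σ).1 (X σ).2) + 1) < lam.ord.cof.ord :=
        Ordinal.iSup_lt_ord hcard (fun σ => by
          rw [Ordinal.add_one_eq_succ]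
          exact (Cardinal.isSuccLimit_ord hκ0).succ_lt (toOrd_lt_self _))
      obtain ⟨η, hη⟩ := exists_toOrd_eq hsup
      refine ⟨η, Set.univ, fun σ => ⟨σ, Set.mem_univ _, le_refl _⟩, fun τ _ => ?_⟩
      have h3 : toOrd (ev (X τ).1 (X τ).2) + 1 ≤ toOrd η := by
        rw [hη]
        exact Ordinal.le_iSup _ τ
      rw [Ordinal.add_one_eq_succ, Order.succ_le_iff] at h3
      exact (toOrd_lt_toOrd.1 h3).le
    · -- cf(λ) < cf(α): pigeonhole
      have hpg : ∃ η, ∀ σ, ∃ τ, σ ≤ τ ∧ ev (X τ).1 (X τ).2 = η := by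
        by_contra hcon
        push_neg at hcon
        choose bnd hbnd using hcon
        have hcard : #(lam.ord.cof.ord.ToType) < (toOrd α).cof.ord.cof := by
          rw [Cardinal.mk_toType, Cardinal.card_ord, hcreg.cof_eq]
          exact hlt
        have hsup : iSup (fun η => toOrd (bnd η) + 1) < (toOrd α).cof.ord :=
          Ordinal.iSup_lt_ord hcard (fun η => by
            rw [Ordinal.add_one_eq_succ]
            exact (Cardinal.isSuccLimit_ord hc0).succ_lt (toOrd_lt_self _))
        obtain ⟨σ, hσ⟩ := exists_toOrd_eq hsup
        have h3 : toOrd (bnd (ev (X σ).1 (X σ).2)) + 1 ≤ toOrd σ := by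
          rw [hσ]
          exact Ordinal.le_iSup _ _
        rw [Ordinal.add_one_eq_succ, Order.succ_le_iff] at h3
        exact hbnd _ σ (toOrd_lt_toOrd.1 h3).le rfl
      obtain ⟨η, hη⟩ := hpg
      refine ⟨η, {τ | ev (X τ).1 (X τ).2 = η}, fun σ => ?_, fun τ hτ => le_of_eq hτ⟩
      obtain ⟨τ, h1, h2⟩ := hη σ
      exact ⟨τ, h2, h1⟩
  obtain ⟨η, S, hSub, hSe⟩ := hSη
  refine ⟨η, (fun τ => bv (X τ).1 (X τ).2) '' S, ?_, ?_, ?_⟩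
  · rintro _ ⟨τ, _, rfl⟩
    exact hb _ _
  · intro x hx
    obtain ⟨τ₀, hτ₀⟩ := hfamcof x hx
    obtain ⟨τ, hτS, hττ₀⟩ := hSub τ₀
    refine ⟨_, Set.mem_image_of_mem _ hτS, ?_⟩
    have h1 : hfam τ₀ < (X τ).1 := toOrd_lt_toOrd.1 (hX2 τ τ₀ hττ₀)
    exact hτ₀.trans (h1.le.trans ((hxa _ _).trans (hab _ _)))
  · have mono : ∀ τ ∈ S, ∀ σ ∈ S, τ < σ →
        f (bv (X τ).1 (X τ).2) η < f (bv (X σ).1 (X σ).2) η := by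
      intro τ hτ σ hσ hlt'
      have h1 : ev (X τ).1 (X τ).2 ≤ η := hSe τ hτ
      have h2 : ev (X σ).1 (X σ).2 ≤ η := hSe σ hσ
      have hiη : i ≤ η := (hie (X τ).1 (X τ).2).trans h1
      have ha'a : a'v (X τ).1 (X τ).2 < av (X σ).1 (X σ).2 :=
        (toOrd_lt_toOrd.1 (hX1 σ τ hlt')).trans_le (hxa _ _)
      calc f (bv (X τ).1 (X τ).2) η ≤ f (a'v (X τ).1 (X τ).2) η := (he _ _ η h1).2
        _ < f (av (X σ).1 (X σ).2) η := hAi _ (ha' _ _) _ (ha _ _) ha'a η hiη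
        _ ≤ f (bv (X σ).1 (X σ).2) η := (he _ _ η h2).1
    rintro _ ⟨τ, hτ, rfl⟩ _ ⟨σ, hσ, rfl⟩ hfe
    simp only at hfe
    rcases lt_trichotomy τ σ with h | h | h
    · exact absurd hfe (ne_of_lt (mono τ hτ σ hσ h))
    · rw [h]
    · exact absurd hfe.symm (ne_of_lt (mono σ hσ τ hτ h))

end
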